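/- Fix p ∈ [1,∞). Let ρ ∈ P(X₁×X₂) with marginals ρ₁, ρ₂, let μ₁ ∈ P(X₁), μ₂ ∈ P(X₂), and let S(ρ;μ₁,μ₂) be any shadow of ρ onto Π(μ₁,μ₂). Then S(ρ;μ₁,μ₂) ∈ Π(μ₁,μ₂) and W_p(S(ρ;μ₁,μ₂), ρ) = (W_p^p(μ₁,ρ₁) + W_p^p(μ₂,ρ₂))^{1/p} = min{ W_p(π, ρ) : π ∈ Π(μ₁,μ₂) }; in particular every shadow of ρ onto Π(μ₁,μ₂) attains the minimum of π ↦ W_p(π,ρ) over Π(μ₁,μ₂). -/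

import Mathlib

open MeasureTheory ProbabilityTheory
open scoped ENNReal

noncomputable section

abbrev Vec (n : ℕ) : Type := Fin n → ℝ

/-- ℓ_p distance on ℝ^n. -/
def lpDist (p : ℝ) {n : ℕ} (x y : Vec n) : ℝ := (∑ i, |x i - y i| ^ p) ^ (1 / p)

/-- product metric d_p on ℝ^{d₁} × ℝ^{d₂}. -/
def prodDist (p : ℝ) {n m : ℕ} (x y : Vec n × Vec m) : ℝ :=
  (lpDist p x.1 y.1 ^ p + lpDist p x.2 y.2 ^ p) ^ (1 / p)

/-- γ is a coupling of α and β. -/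
def IsCoupling {E : Type*} [MeasurableSpace E] (γ : Measure (E × E)) (α β : Measure E) : Prop :=
  IsProbabilityMeasure γ ∧ γ.map Prod.fst = α ∧ γ.map Prod.snd = β

/-- p-Wasserstein distance (p < ∞) w.r.t. a cost/metric c. -/
def Wp {E : Type*} [MeasurableSpace E] (p : ℝ) (c : E → E → ℝ) (α β : Measure E) : ℝ :=
  sInf ((fun γ : Measure (E × E) => (∫ z, c z.1 z.2 ^ p ∂γ) ^ (1 / p)) '' {γ | IsCoupling γ α β})

/-- ∞-Wasserstein distance w.r.t. a cost/metric c. -/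
def Winf {E : Type*} [MeasurableSpace E] (c : E → E → ℝ) (α β : Measure E) : ℝ :=
  sInf ((fun γ : Measure (E × E) => essSup (fun z => c z.1 z.2) γ) '' {γ | IsCoupling γ α β})

/-- q-Wasserstein distance for q ∈ [1,∞]. -/
def Wq {E : Type*} [MeasurableSpace E] (q : ℝ≥0∞) (c : E → E → ℝ) (α β : Measure E) : ℝ :=
  if q = ∞ then Winf c α β else Wp q.toReal c α β

/-- μ is a Borel probability measure concentrated on X. -/
def ProbOn {E : Type*} [MeasurableSpace E] (μ : Measure E) (X : Set E) : Prop :=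
  IsProbabilityMeasure μ ∧ μ Xᶜ = 0

/-- ρ is absolutely continuous with Lebesgue density bounded above and below by strictly
positive constants on X, and vanishing off X. -/
def NiceDensityOn {E : Type*} [MeasureSpace E] (ρ : Measure E) (X : Set E) : Prop :=
  ∃ (f : E → ℝ≥0∞) (c₁ c₂ : ℝ≥0∞), 0 < c₁ ∧ c₂ < ∞ ∧ ρ = volume.withDensity f ∧
    (∀ x ∈ X, c₁ ≤ f x ∧ f x ≤ c₂) ∧ (∀ x ∉ X, f x = 0)

/-- T is an optimal transport map from α to β for W_p w.r.t. cost c. -/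
def IsOptMap {E : Type*} [MeasurableSpace E] (p : ℝ) (c : E → E → ℝ) (α β : Measure E)
    (T : E → E) : Prop :=
  Measurable T ∧ α.map T = β ∧ (∫ x, c x (T x) ^ p ∂α) ^ (1 / p) = Wp p c α β

/-- Π(μ₁, μ₂): couplings of μ₁ and μ₂. -/
def Pi2 {d₁ d₂ : ℕ} (μ₁ : Measure (Vec d₁)) (μ₂ : Measure (Vec d₂)) :
    Set (Measure (Vec d₁ × Vec d₂)) :=
  {π | IsProbabilityMeasure π ∧ π.map Prod.fst = μ₁ ∧ π.map Prod.snd = μ₂}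

/-- S is a shadow of ρ onto Π(μ₁,μ₂) for the p-Wasserstein distance. -/
def IsShadow2 (p : ℝ) {d₁ d₂ : ℕ} (ρ : Measure (Vec d₁ × Vec d₂))
    (μ₁ : Measure (Vec d₁)) (μ₂ : Measure (Vec d₂)) (S : Measure (Vec d₁ × Vec d₂)) : Prop :=
  ∃ (κ₁ : Kernel (Vec d₁) (Vec d₁)) (κ₂ : Kernel (Vec d₂) (Vec d₂)),
    IsMarkovKernel κ₁ ∧ IsMarkovKernel κ₂ ∧
    (∃ γ₁ : Measure (Vec d₁ × Vec d₁),
      (∀ A, MeasurableSet A → γ₁ A = ∫⁻ y, κ₁ y {x | (x, y) ∈ A} ∂(ρ.map Prod.fst)) ∧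
      IsCoupling γ₁ μ₁ (ρ.map Prod.fst) ∧
      (∫ z, lpDist p z.1 z.2 ^ p ∂γ₁) ^ (1 / p) = Wp p (lpDist p) μ₁ (ρ.map Prod.fst)) ∧
    (∃ γ₂ : Measure (Vec d₂ × Vec d₂),
      (∀ A, MeasurableSet A → γ₂ A = ∫⁻ y, κ₂ y {x | (x, y) ∈ A} ∂(ρ.map Prod.snd)) ∧
      IsCoupling γ₂ μ₂ (ρ.map Prod.snd) ∧
      (∫ z, lpDist p z.1 z.2 ^ p ∂γ₂) ^ (1 / p) = Wp p (lpDist p) μ₂ (ρ.map Prod.snd)) ∧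
    (∀ A : Set (Vec d₁ × Vec d₂), MeasurableSet A →
      S A = ∫⁻ y, ((κ₁ y.1).prod (κ₂ y.2)) A ∂ρ)

/-- d_{X,p}: product metric on a K-fold product of Euclidean spaces. -/
def piDist (p : ℝ) {K : ℕ} {d : Fin K → ℕ} (x y : (i : Fin K) → Vec (d i)) : ℝ :=
  (∑ i, lpDist p (x i) (y i) ^ p) ^ (1 / p)

/-- S is a shadow of ρ onto Π(μ₁,…,μ_K) for the p-Wasserstein distance. -/
def IsShadowK (p : ℝ) {K : ℕ} {d : Fin K → ℕ} (ρ : Measure ((i : Fin K) → Vec (d i)))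
    (μ : (i : Fin K) → Measure (Vec (d i))) (S : Measure ((i : Fin K) → Vec (d i))) : Prop :=
  ∃ κ : (i : Fin K) → Kernel (Vec (d i)) (Vec (d i)),
    (∀ i, IsMarkovKernel (κ i)) ∧
    (∀ i, ∃ γ : Measure (Vec (d i) × Vec (d i)),
      (∀ A, MeasurableSet A → γ A = ∫⁻ y, κ i y {x | (x, y) ∈ A} ∂(ρ.map fun z => z i)) ∧
      IsCoupling γ (μ i) (ρ.map fun z => z i) ∧
      (∫ z, lpDist p z.1 z.2 ^ p ∂γ) ^ (1 / p) = Wp p (lpDist p) (μ i) (ρ.map fun z => z i)) ∧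
    (∀ A, MeasurableSet A → S A = ∫⁻ y, Measure.pi (fun i => κ i (y i)) A ∂ρ)


/-!
Glue the two optimal plans along ρ: draw `y ∼ ρ`, then `xᵢ ∼ κᵢ(·|yᵢ)` independently. The
resulting plan `Γ` couples `S` with `ρ`, and its projections onto the two factors are the optimal
plans `γ₁`, `γ₂`; hence `S ∈ Π(μ₁, μ₂)`, and since `d_p^p` splits as a sum over the factors, the
cost of `Γ` is `W_p^p(μ₁, ρ₁) + W_p^p(μ₂, ρ₂)`. Conversely, any plan between some
`π ∈ Π(μ₁, μ₂)` and `ρ` projects to plans between `μᵢ` and `ρᵢ`, so it costs at least this sum.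
Compact supports make every cost integrable, which the splitting of the cost requires.
-/

section Wasserstein

variable {E : Type*} [MeasurableSpace E] {p : ℝ} {c : E → E → ℝ} {α β : Measure E}
  {γ : Measure (E × E)}

def transportCost (p : ℝ) (c : E → E → ℝ) (γ : Measure (E × E)) : ℝ :=
  ∫ z, c z.1 z.2 ^ p ∂γ

lemma transportCost_nonneg (hc : ∀ x y, 0 ≤ c x y) : 0 ≤ transportCost p c γ :=
  integral_nonneg fun _ => Real.rpow_nonneg (hc _ _) _

lemma Wp_nonneg (hc : ∀ x y, 0 ≤ c x y) : 0 ≤ Wp p c α β :=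
  Real.sInf_nonneg <| by
    rintro _ ⟨γ, -, rfl⟩
    exact Real.rpow_nonneg (transportCost_nonneg hc) _

lemma Wp_le_of_isCoupling (hc : ∀ x y, 0 ≤ c x y) (hγ : IsCoupling γ α β) :
    Wp p c α β ≤ transportCost p c γ ^ (1 / p) :=
  csInf_le ⟨0, by rintro _ ⟨γ, -, rfl⟩; exact Real.rpow_nonneg (transportCost_nonneg hc) _⟩
    ⟨γ, hγ, rfl⟩

lemma le_Wp_of_forall_isCoupling [IsProbabilityMeasure α] [IsProbabilityMeasure β] {b : ℝ}
    (h : ∀ γ, IsCoupling γ α β → b ≤ transportCost p c γ ^ (1 / p)) : b ≤ Wp p c α β :=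
  le_csInf ⟨_, α.prod β, ⟨inferInstance, by simp, by simp⟩, rfl⟩
    (by rintro _ ⟨γ, hγ, rfl⟩; exact h γ hγ)

lemma Wp_rpow_le_transportCost (hp : 0 < p) (hc : ∀ x y, 0 ≤ c x y) (hγ : IsCoupling γ α β) :
    Wp p c α β ^ p ≤ transportCost p c γ :=
  calc Wp p c α β ^ p ≤ (transportCost p c γ ^ (1 / p)) ^ p :=
        Real.rpow_le_rpow (Wp_nonneg hc) (Wp_le_of_isCoupling hc hγ) hp.le
    _ = transportCost p c γ := by rw [one_div, Real.rpow_inv_rpow (transportCost_nonneg hc) hp.ne']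

lemma transportCost_eq_Wp_rpow (hp : p ≠ 0) (hc : ∀ x y, 0 ≤ c x y)
    (hopt : transportCost p c γ ^ (1 / p) = Wp p c α β) :
    transportCost p c γ = Wp p c α β ^ p := by
  rw [← hopt, one_div, Real.rpow_inv_rpow (transportCost_nonneg hc) hp]

end Wasserstein

section Coupling

variable {E F : Type*} [MeasurableSpace E] [MeasurableSpace F] {α β : Measure E}
  {γ : Measure (E × E)}

lemma IsCoupling.map_prodMap (hγ : IsCoupling γ α β) {f : E → F} (hf : Measurable f) :
    IsCoupling (γ.map (Prod.map f f)) (α.map f) (β.map f) := by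
  have := hγ.1
  refine ⟨Measure.isProbabilityMeasure_map (hf.prodMap hf).aemeasurable, ?_, ?_⟩
  · rw [Measure.map_map measurable_fst (hf.prodMap hf), ← hγ.2.1,
      Measure.map_map hf measurable_fst]
    rfl
  · rw [Measure.map_map measurable_snd (hf.prodMap hf), ← hγ.2.2,
      Measure.map_map hf measurable_snd]
    rfl

lemma IsCoupling.ae_mem_prod (hγ : IsCoupling γ α β) {K L : Set E} (hα : ∀ᵐ x ∂α, x ∈ K)
    (hβ : ∀ᵐ y ∂β, y ∈ L) : ∀ᵐ z ∂γ, z ∈ K ×ˢ L := by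
  rw [← hγ.2.1] at hα
  rw [← hγ.2.2] at hβ
  filter_upwards [ae_of_ae_map measurable_fst.aemeasurable hα,
    ae_of_ae_map measurable_snd.aemeasurable hβ] with z h₁ h₂
  exact ⟨h₁, h₂⟩

lemma Continuous.integrable_of_ae_mem_compact [TopologicalSpace E] [OpensMeasurableSpace E]
    [T2Space E] {μ : Measure E} [IsFiniteMeasure μ] {f : E → ℝ} (hf : Continuous f) {K : Set E}
    (hK : IsCompact K) (hμ : ∀ᵐ x ∂μ, x ∈ K) : Integrable f μ := by
  rw [← Measure.restrict_eq_self_of_ae_mem hμ]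
  exact hf.continuousOn.integrableOn_compact hK

end Coupling

section Shadow

variable {E₁ E₂ F₁ F₂ : Type*} [MeasurableSpace E₁] [MeasurableSpace E₂] [MeasurableSpace F₁]
  [MeasurableSpace F₂] (κ₁ : Kernel F₁ E₁) (κ₂ : Kernel F₂ E₂) (ρ : Measure (F₁ × F₂))

lemma ProbabilityTheory.Kernel.map_fst_parallelComp [IsSFiniteKernel κ₁] [IsMarkovKernel κ₂] :
    (κ₁ ∥ₖ κ₂).map Prod.fst = κ₁.comap Prod.fst measurable_fst := by
  ext1 y
  rw [Kernel.map_apply _ measurable_fst, Kernel.parallelComp_apply, Measure.map_fst_prod,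
    measure_univ, one_smul, Kernel.comap_apply]

lemma ProbabilityTheory.Kernel.map_snd_parallelComp [IsMarkovKernel κ₁] [IsSFiniteKernel κ₂] :
    (κ₁ ∥ₖ κ₂).map Prod.snd = κ₂.comap Prod.snd measurable_snd := by
  ext1 y
  rw [Kernel.map_apply _ measurable_snd, Kernel.parallelComp_apply, Measure.map_snd_prod,
    measure_univ, one_smul, Kernel.comap_apply]

lemma MeasureTheory.Measure.comap_comp {κ : Kernel F₁ E₁} {f : F₂ → F₁} (hf : Measurable f)
    (μ : Measure F₂) :
    κ.comap f hf ∘ₘ μ = κ ∘ₘ μ.map f := by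
  rw [← Kernel.comp_deterministic_eq_comap, ← Measure.comp_assoc,
    Measure.deterministic_comp_eq_map]

def shadowCoupling : Measure ((E₁ × E₂) × (F₁ × F₂)) :=
  ((κ₁ ∥ₖ κ₂) ×ₖ Kernel.id) ∘ₘ ρ

instance [IsMarkovKernel κ₁] [IsMarkovKernel κ₂] [IsProbabilityMeasure ρ] :
    IsProbabilityMeasure (shadowCoupling κ₁ κ₂ ρ) := by
  unfold shadowCoupling; infer_instance

lemma map_fst_shadowCoupling : (shadowCoupling κ₁ κ₂ ρ).map Prod.fst = (κ₁ ∥ₖ κ₂) ∘ₘ ρ := by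
  rw [shadowCoupling, Measure.map_comp _ _ measurable_fst, ← Kernel.fst_eq, Kernel.fst_prod]

lemma map_snd_shadowCoupling [IsMarkovKernel κ₁] [IsMarkovKernel κ₂] :
    (shadowCoupling κ₁ κ₂ ρ).map Prod.snd = ρ := by
  rw [shadowCoupling, Measure.map_comp _ _ measurable_snd, ← Kernel.snd_eq, Kernel.snd_prod,
    Measure.id_comp]

lemma map_prodMap_fst_shadowCoupling [IsSFiniteKernel κ₁] [IsMarkovKernel κ₂] :
    (shadowCoupling κ₁ κ₂ ρ).map (Prod.map Prod.fst Prod.fst) =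
      (κ₁ ×ₖ Kernel.id) ∘ₘ ρ.map Prod.fst := by
  rw [shadowCoupling, Measure.map_comp _ _ (measurable_fst.prodMap measurable_fst),
    ← Kernel.map_prod_map _ _ measurable_fst measurable_fst, Kernel.map_fst_parallelComp,
    Kernel.id_map measurable_fst, ← Kernel.id_comap, ← Kernel.comap_prod,
    Measure.comap_comp measurable_fst]

lemma map_prodMap_snd_shadowCoupling [IsMarkovKernel κ₁] [IsSFiniteKernel κ₂] :
    (shadowCoupling κ₁ κ₂ ρ).map (Prod.map Prod.snd Prod.snd) =
      (κ₂ ×ₖ Kernel.id) ∘ₘ ρ.map Prod.snd := by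
  rw [shadowCoupling, Measure.map_comp _ _ (measurable_snd.prodMap measurable_snd),
    ← Kernel.map_prod_map _ _ measurable_snd measurable_snd, Kernel.map_snd_parallelComp,
    Kernel.id_map measurable_snd, ← Kernel.id_comap, ← Kernel.comap_prod,
    Measure.comap_comp measurable_snd]

lemma eq_parallelComp_comp_of_forall [IsSFiniteKernel κ₁] [IsSFiniteKernel κ₂]
    {S : Measure (E₁ × E₂)}
    (h : ∀ A, MeasurableSet A → S A = ∫⁻ y, ((κ₁ y.1).prod (κ₂ y.2)) A ∂ρ) :
    S = (κ₁ ∥ₖ κ₂) ∘ₘ ρ := by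
  ext A hA
  simp_rw [h A hA, Measure.bind_apply hA (Kernel.aemeasurable _), Kernel.parallelComp_apply]

lemma eq_prod_id_comp_of_forall [IsSFiniteKernel κ₁] {ν : Measure F₁} {γ : Measure (E₁ × F₁)}
    (h : ∀ A, MeasurableSet A → γ A = ∫⁻ y, κ₁ y {x | (x, y) ∈ A} ∂ν) :
    γ = (κ₁ ×ₖ Kernel.id) ∘ₘ ν := by
  ext A hA
  rw [h A hA, Measure.bind_apply hA (Kernel.aemeasurable _)]
  refine lintegral_congr fun y => ?_
  rw [Kernel.prod_apply, Kernel.id_apply, Measure.prod_dirac,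
    Measure.map_apply measurable_prodMk_right hA]
  rfl

end Shadow

lemma ProbOn.ae_mem {E : Type*} [MeasurableSpace E] {μ : Measure E} {X : Set E}
    (h : ProbOn μ X) : ∀ᵐ x ∂μ, x ∈ X :=
  ae_iff.2 h.2

lemma ProbOn.ae_mem_map {E F : Type*} [MeasurableSpace E] [MeasurableSpace F] {μ : Measure E}
    {X : Set E} (h : ProbOn μ X) {f : E → F} (hf : Measurable f) {Y : Set F}
    (hY : MeasurableSet Y) (hXY : Set.MapsTo f X Y) : ∀ᵐ y ∂μ.map f, y ∈ Y :=
  (ae_map_iff hf.aemeasurable hY).2 (h.ae_mem.mono hXY)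

section LpCost

variable {p : ℝ} {n m : ℕ}

lemma lpDist_nonneg (p : ℝ) (x y : Vec n) : 0 ≤ lpDist p x y :=
  Real.rpow_nonneg (Finset.sum_nonneg fun _ _ => Real.rpow_nonneg (abs_nonneg _) _) _

lemma prodDist_nonneg (p : ℝ) (x y : Vec n × Vec m) : 0 ≤ prodDist p x y :=
  Real.rpow_nonneg (add_nonneg (Real.rpow_nonneg (lpDist_nonneg _ _ _) _)
    (Real.rpow_nonneg (lpDist_nonneg _ _ _) _)) _

lemma prodDist_rpow (hp : p ≠ 0) (x y : Vec n × Vec m) :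
    prodDist p x y ^ p = lpDist p x.1 y.1 ^ p + lpDist p x.2 y.2 ^ p := by
  rw [prodDist, one_div, Real.rpow_inv_rpow (add_nonneg (Real.rpow_nonneg (lpDist_nonneg _ _ _) _)
    (Real.rpow_nonneg (lpDist_nonneg _ _ _) _)) hp]

lemma continuous_lpDist_rpow (hp : 0 ≤ p) :
    Continuous fun w : Vec n × Vec n => lpDist p w.1 w.2 ^ p := by
  unfold lpDist
  refine Continuous.rpow_const ?_ fun _ => Or.inr hp
  refine Continuous.rpow_const ?_ fun _ => Or.inr (one_div_nonneg.2 hp)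
  exact continuous_finsetSum _ fun i _ => Continuous.rpow_const (by fun_prop) fun _ => Or.inr hp

lemma IsCoupling.integrable_lpDist_rpow (hp : 0 ≤ p) {γ : Measure (Vec n × Vec n)}
    {α β : Measure (Vec n)} (hγ : IsCoupling γ α β) {K : Set (Vec n)} (hK : IsCompact K)
    (hα : ∀ᵐ x ∂α, x ∈ K) (hβ : ∀ᵐ y ∂β, y ∈ K) :
    Integrable (fun w => lpDist p w.1 w.2 ^ p) γ :=
  have := hγ.1
  (continuous_lpDist_rpow hp).integrable_of_ae_mem_compact (hK.prod hK) (hγ.ae_mem_prod hα hβ)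

lemma transportCost_prodDist (hp : p ≠ 0) {γ : Measure ((Vec n × Vec m) × (Vec n × Vec m))}
    (h₁ : Integrable (fun w => lpDist p w.1 w.2 ^ p) (γ.map (Prod.map Prod.fst Prod.fst)))
    (h₂ : Integrable (fun w => lpDist p w.1 w.2 ^ p) (γ.map (Prod.map Prod.snd Prod.snd))) :
    transportCost p (prodDist p) γ =
      transportCost p (lpDist p) (γ.map (Prod.map Prod.fst Prod.fst)) +
        transportCost p (lpDist p) (γ.map (Prod.map Prod.snd Prod.snd)) := by
  have hm₁ : Measurable
      (Prod.map Prod.fst Prod.fst : (Vec n × Vec m) × (Vec n × Vec m) → Vec n × Vec n) :=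
    measurable_fst.prodMap measurable_fst
  have hm₂ : Measurable
      (Prod.map Prod.snd Prod.snd : (Vec n × Vec m) × (Vec n × Vec m) → Vec m × Vec m) :=
    measurable_snd.prodMap measurable_snd
  unfold transportCost
  rw [integral_map hm₁.aemeasurable h₁.1, integral_map hm₂.aemeasurable h₂.1]
  refine Eq.trans ?_ (integral_add ((integrable_map_measure h₁.1 hm₁.aemeasurable).1 h₁)
    ((integrable_map_measure h₂.1 hm₂.aemeasurable).1 h₂))
  simp only [prodDist_rpow hp]
  rfl

end LpCost

section Projection

variable {d₁ d₂ : ℕ} {X₁ : Set (Vec d₁)} {X₂ : Set (Vec d₂)} {p : ℝ}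
  {ρ π : Measure (Vec d₁ × Vec d₂)} {μ₁ : Measure (Vec d₁)} {μ₂ : Measure (Vec d₂)}

lemma transportCost_prodDist_of_isCoupling (hX₁ : IsCompact X₁) (hX₂ : IsCompact X₂)
    (hp : 0 < p) (hρ : ProbOn ρ (X₁ ×ˢ X₂)) (hμ₁ : ProbOn μ₁ X₁) (hμ₂ : ProbOn μ₂ X₂)
    (hπ : π ∈ Pi2 μ₁ μ₂) {γ : Measure ((Vec d₁ × Vec d₂) × (Vec d₁ × Vec d₂))}
    (hγ : IsCoupling γ π ρ) :
    transportCost p (prodDist p) γ =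
      transportCost p (lpDist p) (γ.map (Prod.map Prod.fst Prod.fst)) +
        transportCost p (lpDist p) (γ.map (Prod.map Prod.snd Prod.snd)) := by
  refine transportCost_prodDist hp.ne' ?_ ?_
  · refine (hγ.map_prodMap measurable_fst).integrable_lpDist_rpow hp.le hX₁ ?_
      (hρ.ae_mem_map measurable_fst hX₁.measurableSet fun _ h => h.1)
    rw [hπ.2.1]
    exact hμ₁.ae_mem
  · refine (hγ.map_prodMap measurable_snd).integrable_lpDist_rpow hp.le hX₂ ?_
      (hρ.ae_mem_map measurable_snd hX₂.measurableSet fun _ h => h.2)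
    rw [hπ.2.2]
    exact hμ₂.ae_mem

lemma rpow_add_rpow_le_Wp_prodDist (hX₁ : IsCompact X₁) (hX₂ : IsCompact X₂) (hp : 0 < p)
    (hρ : ProbOn ρ (X₁ ×ˢ X₂)) (hμ₁ : ProbOn μ₁ X₁) (hμ₂ : ProbOn μ₂ X₂) (hπ : π ∈ Pi2 μ₁ μ₂) :
    (Wp p (lpDist p) μ₁ (ρ.map Prod.fst) ^ p + Wp p (lpDist p) μ₂ (ρ.map Prod.snd) ^ p) ^ (1 / p)
      ≤ Wp p (prodDist p) π ρ := by
  have := hπ.1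
  have := hρ.1
  refine le_Wp_of_forall_isCoupling fun γ hγ => Real.rpow_le_rpow
    (add_nonneg (Real.rpow_nonneg (Wp_nonneg (lpDist_nonneg p)) _)
      (Real.rpow_nonneg (Wp_nonneg (lpDist_nonneg p)) _)) ?_ (one_div_nonneg.2 hp.le)
  have h₁ := hγ.map_prodMap measurable_fst
  have h₂ := hγ.map_prodMap measurable_snd
  rw [hπ.2.1] at h₁
  rw [hπ.2.2] at h₂
  rw [transportCost_prodDist_of_isCoupling hX₁ hX₂ hp hρ hμ₁ hμ₂ hπ hγ]
  exact add_le_add (Wp_rpow_le_transportCost hp (lpDist_nonneg p) h₁)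
    (Wp_rpow_le_transportCost hp (lpDist_nonneg p) h₂)

end Projection

/-- every shadow of ρ onto Π(μ₁,μ₂) lies in Π(μ₁,μ₂) and attains the
minimum of π ↦ W_p(π,ρ) over Π(μ₁,μ₂), with value (W_p^p(μ₁,ρ₁) + W_p^p(μ₂,ρ₂))^{1/p}. -/
theorem shadow_is_projection
    (d₁ d₂ : ℕ) (X₁ : Set (Vec d₁)) (X₂ : Set (Vec d₂))
    (hX₁c : IsCompact X₁) (hX₂c : IsCompact X₂)
    (p : ℝ) (hp : 1 ≤ p)
    (ρ : Measure (Vec d₁ × Vec d₂)) (hρ : ProbOn ρ (X₁ ×ˢ X₂))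
    (μ₁ : Measure (Vec d₁)) (μ₂ : Measure (Vec d₂))
    (hμ₁ : ProbOn μ₁ X₁) (hμ₂ : ProbOn μ₂ X₂)
    (S : Measure (Vec d₁ × Vec d₂)) (hS : IsShadow2 p ρ μ₁ μ₂ S) :
    S ∈ Pi2 μ₁ μ₂ ∧
    Wp p (prodDist p) S ρ =
      (Wp p (lpDist p) μ₁ (ρ.map Prod.fst) ^ p + Wp p (lpDist p) μ₂ (ρ.map Prod.snd) ^ p)
        ^ (1 / p) ∧
    ∀ π ∈ Pi2 μ₁ μ₂, Wp p (prodDist p) S ρ ≤ Wp p (prodDist p) π ρ := by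
  obtain ⟨κ₁, κ₂, _, _, ⟨γ₁, hγ₁, hγ₁c, hγ₁opt⟩, ⟨γ₂, hγ₂, hγ₂c, hγ₂opt⟩, hSκ⟩ := hS
  have hp₀ : 0 < p := by linarith
  have := hρ.1
  have hΓ : IsCoupling (shadowCoupling κ₁ κ₂ ρ) S ρ := ⟨inferInstance,
    by rw [map_fst_shadowCoupling, eq_parallelComp_comp_of_forall κ₁ κ₂ ρ hSκ],
    map_snd_shadowCoupling κ₁ κ₂ ρ⟩
  have hΓ₁ : (shadowCoupling κ₁ κ₂ ρ).map (Prod.map Prod.fst Prod.fst) = γ₁ := by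
    rw [map_prodMap_fst_shadowCoupling, eq_prod_id_comp_of_forall κ₁ hγ₁]
  have hΓ₂ : (shadowCoupling κ₁ κ₂ ρ).map (Prod.map Prod.snd Prod.snd) = γ₂ := by
    rw [map_prodMap_snd_shadowCoupling, eq_prod_id_comp_of_forall κ₂ hγ₂]
  have hSmem : S ∈ Pi2 μ₁ μ₂ :=
    ⟨hΓ.2.1 ▸ Measure.isProbabilityMeasure_map measurable_fst.aemeasurable,
    by rw [← hγ₁c.2.1, ← hΓ₁, (hΓ.map_prodMap measurable_fst).2.1],
    by rw [← hγ₂c.2.1, ← hΓ₂, (hΓ.map_prodMap measurable_snd).2.1]⟩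
  have hlower := fun π (hπ : π ∈ Pi2 μ₁ μ₂) =>
    rpow_add_rpow_le_Wp_prodDist hX₁c hX₂c hp₀ hρ hμ₁ hμ₂ hπ
  have hupper : Wp p (prodDist p) S ρ ≤
      (Wp p (lpDist p) μ₁ (ρ.map Prod.fst) ^ p + Wp p (lpDist p) μ₂ (ρ.map Prod.snd) ^ p)
        ^ (1 / p) := by
    rw [← transportCost_eq_Wp_rpow hp₀.ne' (lpDist_nonneg p) hγ₁opt,
      ← transportCost_eq_Wp_rpow hp₀.ne' (lpDist_nonneg p) hγ₂opt, ← hΓ₁, ← hΓ₂,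
      ← transportCost_prodDist_of_isCoupling hX₁c hX₂c hp₀ hρ hμ₁ hμ₂ hSmem hΓ]
    exact Wp_le_of_isCoupling (prodDist_nonneg p) hΓ
  have hW := le_antisymm hupper (hlower S hSmem)
  exact ⟨hSmem, hW, fun π hπ => hW ▸ hlower π hπ⟩
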